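/- Let μ be a Gibbs measure for a d-Hölder continuous φ : Σ_A → ℝ with pressure P = 0. For x ∈ Σ_A^* ∪ {∅} define Υ_x(t) := card{ y ∈ Σ_A^* : [y] ⊆ [x] and μ([y]) > t }. Then Υ_x(t) is comparable to t^{−1} as t tends to 0 from above: there exist constants c_1, c_2 > 0 and t_0 > 0 such that c_1 t^{−1} ≤ Υ_x(t) ≤ c_2 t^{−1} for all 0 < t < t_0. -/
import Mathlib


open MeasureTheory Filter
open scoped ENNReal NNReal

namespace SFT

variable {l : ℕ}

/-- The one-sided subshift of finite type determined by the `l × l` matrix `A`: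
infinite sequences with transitions allowed by `A`. -/
abbrev SigmaA (l : ℕ) (A : Matrix (Fin l) (Fin l) ℕ) : Type :=
  {ω : ℕ → Fin l // ∀ k, A (ω k) (ω (k + 1)) = 1}

/-- The left shift `σ` on `SigmaA l A`. -/
def shift {A : Matrix (Fin l) (Fin l) ℕ} (ω : SigmaA l A) : SigmaA l A :=
  ⟨fun n => ω.1 (n + 1), fun k => ω.2 (k + 1)⟩

/-- Birkhoff sums `S_k φ = ∑_{m<k} φ ∘ σ^m`. -/
def birkhoff {A : Matrix (Fin l) (Fin l) ℕ} (φ : SigmaA l A → ℝ) (k : ℕ) (ω : SigmaA l A) : ℝ :=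
  ∑ m ∈ Finset.range k, φ (shift^[m] ω)

/-- The matrix `A` has `0`-`1` entries and is irreducible and aperiodic
(some power of `A` has all entries strictly positive). -/
def Primitive (A : Matrix (Fin l) (Fin l) ℕ) : Prop :=
  (∀ i j, A i j = 0 ∨ A i j = 1) ∧ ∃ n : ℕ, 0 < n ∧ ∀ i j, 0 < (A ^ n) i j

/-- A finite word is admissible, i.e. belongs to `Σ_A^*`. -/
def Admissible (A : Matrix (Fin l) (Fin l) ℕ) (x : List (Fin l)) : Prop :=
  x ≠ [] ∧ ∀ (i : ℕ) (h : i + 1 < x.length), A (x[i]'(by omega)) (x[i + 1]'h) = 1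

/-- The cylinder set `[x]` of a finite word (the empty word gives all of `Σ_A`). -/
def cylinder (A : Matrix (Fin l) (Fin l) ℕ) (x : List (Fin l)) : Set (SigmaA l A) :=
  {ω | ∀ (i : ℕ) (h : i < x.length), ω.1 i = x[i]'h}

/-- The initial word `(ω_1, …, ω_k)` of `ω`. -/
def wordPrefix {A : Matrix (Fin l) (Fin l) ℕ} (ω : SigmaA l A) (k : ℕ) : List (Fin l) :=
  List.ofFn (fun i : Fin k => ω.1 i)

/-! ### basic lemmas -/

variable {A : Matrix (Fin l) (Fin l) ℕ}

@[simp] lemma wp_length (ω : SigmaA l A) (k : ℕ) : (wordPrefix ω k).length = k := by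
  simp [wordPrefix]

lemma wp_get (ω : SigmaA l A) (k i : ℕ) (h : i < (wordPrefix ω k).length) :
    (wordPrefix ω k)[i] = ω.1 i := by
  simp [wordPrefix]

lemma wp_append (ω : SigmaA l A) (a m : ℕ) :
    wordPrefix ω (a + m) = wordPrefix ω a ++ List.ofFn (fun i : Fin m => ω.1 (a + i)) := by
  apply List.ext_getElem
  · simp
  · intro i h1 h2
    rcases lt_or_ge i a with hi | hi
    · rw [wp_get, List.getElem_append_left (by simpa using hi), wp_get]
    · rw [wp_get, List.getElem_append_right (by simpa using hi)]
      simp only [List.getElem_ofFn]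
      show ω.1 i = ω.1 (a + (i - (wordPrefix ω a).length))
      rw [wp_length]
      have h3 : a + (i - a) = i := by omega
      rw [h3]

lemma wp_prefix (ω : SigmaA l A) {a b : ℕ} (h : a ≤ b) :
    wordPrefix ω a <+: wordPrefix ω b := by
  refine ⟨List.ofFn (fun i : Fin (b - a) => ω.1 (a + i)), ?_⟩
  rw [← wp_append]; congr 1; omega

lemma wp_succ (ω : SigmaA l A) (k : ℕ) :
    wordPrefix ω (k + 1) = wordPrefix ω k ++ [ω.1 k] := by
  rw [wp_append]; simp

lemma mem_cylinder_wp (ω : SigmaA l A) (k : ℕ) : ω ∈ cylinder A (wordPrefix ω k) := by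
  intro i h
  rw [wp_get]

lemma eq_wp_of_mem_cylinder {ω : SigmaA l A} {y : List (Fin l)} (h : ω ∈ cylinder A y) :
    y = wordPrefix ω y.length := by
  apply List.ext_getElem (by simp)
  intro i h1 h2
  rw [wp_get, ← h i h1]

lemma cylinder_anti {y z : List (Fin l)} (h : y <+: z) :
    cylinder A z ⊆ cylinder A y := by
  intro ω hω i hi
  rw [h.getElem hi]
  exact hω i (lt_of_lt_of_le hi h.length_le)

@[simp] lemma cylinder_nil : cylinder A [] = Set.univ := by
  ext ω; simp [cylinder]

lemma wp_zero (ω : SigmaA l A) : wordPrefix ω 0 = [] := by simp [wordPrefix]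

lemma wp_admissible (ω : SigmaA l A) {k : ℕ} (hk : 0 < k) : Admissible A (wordPrefix ω k) := by
  constructor
  · intro h
    have := congrArg List.length h
    simp at this; omega
  · intro i h
    rw [wp_get, wp_get]
    exact ω.2 i

lemma measurableSet_cylinder (y : List (Fin l)) : MeasurableSet (cylinder A y) := by
  have : cylinder A y = ⋂ (i : Fin y.length), {ω : SigmaA l A | ω.1 i = y[i]} := by
    ext ω
    simp only [cylinder, Set.mem_setOf_eq, Set.mem_iInter]
    exact ⟨fun h i => h i i.2, fun h i hi => h ⟨i, hi⟩⟩
  rw [this]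
  refine MeasurableSet.iInter fun i => ?_
  have : Measurable fun ω : SigmaA l A => ω.1 i := (measurable_pi_apply _).comp measurable_subtype_coe
  exact this (measurableSet_singleton _)

lemma cylinder_disjoint {y z : List (Fin l)} (hlen : y.length = z.length) (hne : y ≠ z) :
    Disjoint (cylinder A y) (cylinder A z) := by
  rw [Set.disjoint_left]
  intro ω hy hz
  exact hne ((eq_wp_of_mem_cylinder hy).trans (by rw [hlen, ← eq_wp_of_mem_cylinder hz]))

lemma comparable_of_mem_cylinder {y z : List (Fin l)} {ω : SigmaA l A}
    (hy : ω ∈ cylinder A y) (hz : ω ∈ cylinder A z) (h : y.length ≤ z.length) :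
    y <+: z := by
  rw [eq_wp_of_mem_cylinder hy, eq_wp_of_mem_cylinder hz]
  exact wp_prefix ω h

lemma cylinder_eq_iUnion (y : List (Fin l)) :
    cylinder A y = ⋃ a : Fin l, cylinder A (y ++ [a]) := by
  ext ω
  simp only [Set.mem_iUnion]
  constructor
  · intro h
    refine ⟨ω.1 y.length, fun i hi => ?_⟩
    rcases lt_or_ge i y.length with h' | h'
    · rw [List.getElem_append_left h']; exact h i h'
    · have : i = y.length := by simp at hi; omega
      subst this
      simp
  · rintro ⟨a, ha⟩ i hi
    have := ha i (by simp; omega)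
    rwa [List.getElem_append_left hi] at this

/-! ### point constructions -/

lemma succ_exists (hA : Primitive A) (i : Fin l) : ∃ j, A i j = 1 := by
  obtain ⟨h01, n, hn, hpos⟩ := hA
  have hl0 : 0 < l := Fin.pos i
  have h1 : A ^ n = A * A ^ (n - 1) := by
    conv_lhs => rw [show n = 1 + (n - 1) by omega]
    rw [pow_add, pow_one]
  have := hpos i i
  rw [h1, Matrix.mul_apply] at this
  obtain ⟨k, -, hk⟩ := Finset.exists_ne_zero_of_sum_ne_zero (by omega : (∑ j, A i j * (A ^ (n-1)) j i) ≠ 0)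
  refine ⟨k, ?_⟩
  rcases h01 i k with h | h
  · simp [h] at hk
  · exact h

lemma chainExtend (hA : Primitive A) (g : ℕ → Fin l) (k : ℕ)
    (hg : ∀ i, i + 1 < k → A (g i) (g (i + 1)) = 1) :
    ∃ ω : SigmaA l A, ∀ i < k, ω.1 i = g i := by
  classical
  set k' := max k 1 with hk'
  have hg' : ∀ i, i + 1 < k' → A (g i) (g (i + 1)) = 1 := by
    intro i hi
    exact hg i (by omega)
  have h : ∀ i : Fin l, ∃ j, A i j = 1 := succ_exists hA
  let f : ℕ → Fin l := fun m => Nat.rec (g (k' - 1)) (fun _ x => Classical.choose (h x)) m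
  have hf : ∀ m, A (f m) (f (m + 1)) = 1 := fun m => Classical.choose_spec (h (f m))
  refine ⟨⟨fun i => if i + 1 ≤ k' then g i else f (i + 1 - k'), fun i => ?_⟩, fun i hi => ?_⟩
  · show A (if i + 1 ≤ k' then g i else f (i + 1 - k'))
        (if i + 1 + 1 ≤ k' then g (i + 1) else f (i + 1 + 1 - k')) = 1
    by_cases h1 : i + 1 + 1 ≤ k'
    · rw [if_pos (show i + 1 ≤ k' by omega), if_pos h1]
      exact hg' i (by omega)
    · by_cases h2 : i + 1 ≤ k'
      · have : i = k' - 1 := by omega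
        rw [if_pos h2, if_neg h1]
        subst this
        have : k' - 1 + 1 + 1 - k' = 1 := by omega
        rw [this]
        have h0 : g (k' - 1) = f 0 := rfl
        rw [h0]
        exact hf 0
      · rw [if_neg h1, if_neg h2]
        have : i + 1 + 1 - k' = (i + 1 - k') + 1 := by omega
        rw [this]
        exact hf _
  · show (if i + 1 ≤ k' then g i else f (i + 1 - k')) = g i
    rw [if_pos (show i + 1 ≤ k' by omega)]

lemma path_exists (hA : Primitive A) (m : ℕ) (i j : Fin l) (hpos : 0 < (A ^ m) i j) :
    ∃ p : ℕ → Fin l, p 0 = i ∧ p m = j ∧ ∀ r < m, A (p r) (p (r + 1)) = 1 := by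
  induction m generalizing j with
  | zero =>
    have : i = j := by
      by_contra hne
      simp [Matrix.one_apply, hne] at hpos
    exact ⟨fun _ => i, rfl, this ▸ rfl, by omega⟩
  | succ m ih =>
    rw [pow_succ, Matrix.mul_apply] at hpos
    obtain ⟨b, -, hb⟩ := Finset.exists_ne_zero_of_sum_ne_zero (by omega : (∑ b, (A ^ m) i b * A b j) ≠ 0)
    have hb1 : 0 < (A ^ m) i b := by by_contra h; simp [Nat.eq_zero_of_not_pos h] at hb
    have hb2 : A b j = 1 := by
      rcases hA.1 b j with h | h
      · simp [h] at hb
      · exact h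
    obtain ⟨p, hp0, hpm, hpt⟩ := ih b hb1
    refine ⟨fun r => if r ≤ m then p r else j, by simp [hp0], by simp, fun r hr => ?_⟩
    show A (if r ≤ m then p r else j) (if r + 1 ≤ m then p (r + 1) else j) = 1
    rcases Nat.lt_or_ge (r + 1) (m + 1) with h | h
    · rw [if_pos (show r ≤ m by omega), if_pos (show r + 1 ≤ m by omega)]
      exact hpt r (by omega)
    · have hr1 : r = m := by omega
      rw [hr1, if_pos (le_refl m), if_neg (by omega : ¬ m + 1 ≤ m), hpm]
      exact hb2

lemma exists_point (hA : Primitive A) (hl : 2 ≤ l) : ∃ ω : SigmaA l A, True := by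
  obtain ⟨ω, -⟩ := chainExtend hA (fun _ => ⟨0, by omega⟩) 0 (by omega)
  exact ⟨ω, trivial⟩

lemma exists_point_prefix (hA : Primitive A) {y : List (Fin l)} (hy : Admissible A y) :
    ∃ ω : SigmaA l A, wordPrefix ω y.length = y := by
  have hl0 : 0 < l := by
    rcases hy with ⟨hne, -⟩
    cases y with
    | nil => exact absurd rfl hne
    | cons a _ => exact Fin.pos a
  obtain ⟨ω, hω⟩ := chainExtend hA (fun i => y.getD i ⟨0, hl0⟩) y.length
    (fun i hi => by
      show A (y.getD i ⟨0, hl0⟩) (y.getD (i + 1) ⟨0, hl0⟩) = 1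
      rw [List.getD_eq_getElem y _ (by omega : i < y.length), List.getD_eq_getElem y _ hi]
      exact hy.2 i hi)
  refine ⟨ω, ?_⟩
  apply List.ext_getElem (by simp)
  intro i h1 h2
  rw [wp_get, hω i (by simpa using h1), List.getD_eq_getElem y _ h2]

/-! ### Gibbs estimates -/

section Gibbs

variable {φ : SigmaA l A → ℝ} {μ : Measure (SigmaA l A)} {c : ℝ}

lemma birkhoff_add (φ : SigmaA l A → ℝ) (k m : ℕ) (ω : SigmaA l A) :
    birkhoff φ (k + m) ω = birkhoff φ k ω + birkhoff φ m (shift^[k] ω) := by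
  unfold birkhoff
  rw [Finset.sum_range_add]
  congr 1
  apply Finset.sum_congr rfl
  intro i _
  rw [add_comm k i, Function.iterate_add_apply]

lemma birkhoff_ge (φ : SigmaA l A → ℝ) {mφ : ℝ} (hmφ : ∀ υ, mφ ≤ φ υ) (k : ℕ) (ω : SigmaA l A) :
    k * mφ ≤ birkhoff φ k ω := by
  calc (k : ℝ) * mφ = ∑ m ∈ Finset.range k, mφ := by
        rw [Finset.sum_const, Finset.card_range, nsmul_eq_mul]
    _ ≤ birkhoff φ k ω := Finset.sum_le_sum fun i _ => hmφ _

variable [IsProbabilityMeasure μ]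

lemma mur_le_one (y : List (Fin l)) : (μ (cylinder A y)).toReal ≤ 1 := by
  rw [show (1:ℝ) = (μ Set.univ).toReal by simp]
  exact ENNReal.toReal_mono (by simp) (measure_mono (Set.subset_univ _))

lemma mur_nonneg (y : List (Fin l)) : 0 ≤ (μ (cylinder A y)).toReal := ENNReal.toReal_nonneg

lemma mur_mono {y z : List (Fin l)} (h : cylinder A z ⊆ cylinder A y) :
    (μ (cylinder A z)).toReal ≤ (μ (cylinder A y)).toReal :=
  ENNReal.toReal_mono (measure_ne_top μ _) (measure_mono h)

lemma mur_wp_zero (ω : SigmaA l A) : (μ (cylinder A (wordPrefix ω 0))).toReal = 1 := by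
  rw [wp_zero, cylinder_nil]; simp

lemma gibbs_lower (hc : 1 < c)
    (hG : ∀ (ω : SigmaA l A) (k : ℕ), 0 < k →
      c⁻¹ ≤ (μ (cylinder A (wordPrefix ω k))).toReal / Real.exp (birkhoff φ k ω) ∧
      (μ (cylinder A (wordPrefix ω k))).toReal / Real.exp (birkhoff φ k ω) ≤ c)
    (ω : SigmaA l A) {k : ℕ} (hk : 0 < k) :
    c⁻¹ * Real.exp (birkhoff φ k ω) ≤ (μ (cylinder A (wordPrefix ω k))).toReal := by
  have := (hG ω k hk).1
  rwa [le_div_iff₀ (Real.exp_pos _)] at this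

lemma gibbs_upper (hc : 1 < c)
    (hG : ∀ (ω : SigmaA l A) (k : ℕ), 0 < k →
      c⁻¹ ≤ (μ (cylinder A (wordPrefix ω k))).toReal / Real.exp (birkhoff φ k ω) ∧
      (μ (cylinder A (wordPrefix ω k))).toReal / Real.exp (birkhoff φ k ω) ≤ c)
    (ω : SigmaA l A) (k : ℕ) :
    (μ (cylinder A (wordPrefix ω k))).toReal ≤ c * Real.exp (birkhoff φ k ω) := by
  rcases Nat.eq_zero_or_pos k with h | h
  · subst h
    rw [mur_wp_zero, birkhoff]
    simp
    nlinarith [hc]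
  · have := (hG ω k h).2
    rwa [div_le_iff₀ (Real.exp_pos _)] at this

lemma child_lower (hc : 1 < c)
    (hG : ∀ (ω : SigmaA l A) (k : ℕ), 0 < k →
      c⁻¹ ≤ (μ (cylinder A (wordPrefix ω k))).toReal / Real.exp (birkhoff φ k ω) ∧
      (μ (cylinder A (wordPrefix ω k))).toReal / Real.exp (birkhoff φ k ω) ≤ c)
    {mφ : ℝ} (hmφ : ∀ υ, mφ ≤ φ υ) (ω : SigmaA l A) (k : ℕ) :
    c⁻¹ * c⁻¹ * Real.exp mφ * (μ (cylinder A (wordPrefix ω k))).toReal ≤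
      (μ (cylinder A (wordPrefix ω (k + 1)))).toReal := by
  have hc0 : (0:ℝ) < c⁻¹ := inv_pos.2 (by linarith)
  have h1 := gibbs_lower hc hG ω (Nat.succ_pos k)
  have h2 := gibbs_upper hc hG ω k
  have hb : birkhoff φ (k + 1) ω = birkhoff φ k ω + birkhoff φ 1 (shift^[k] ω) :=
    birkhoff_add φ k 1 ω
  have hb1 : mφ ≤ birkhoff φ 1 (shift^[k] ω) := by
    have := birkhoff_ge φ hmφ 1 (shift^[k] ω)
    simpa using this
  have he : Real.exp mφ * Real.exp (birkhoff φ k ω) ≤ Real.exp (birkhoff φ (k + 1) ω) := by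
    rw [hb, Real.exp_add, mul_comm (Real.exp (birkhoff φ k ω)) _]
    exact mul_le_mul_of_nonneg_right (Real.exp_le_exp.2 hb1) (Real.exp_pos _).le
  have he2 : c⁻¹ * (μ (cylinder A (wordPrefix ω k))).toReal ≤ Real.exp (birkhoff φ k ω) := by
    rw [inv_mul_le_iff₀ (by linarith : (0:ℝ) < c)]
    exact h2
  calc c⁻¹ * c⁻¹ * Real.exp mφ * (μ (cylinder A (wordPrefix ω k))).toReal
      = c⁻¹ * (Real.exp mφ * (c⁻¹ * (μ (cylinder A (wordPrefix ω k))).toReal)) := by ring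
    _ ≤ c⁻¹ * (Real.exp mφ * Real.exp (birkhoff φ k ω)) := by
        refine mul_le_mul_of_nonneg_left (mul_le_mul_of_nonneg_left he2 (Real.exp_pos _).le) hc0.le
    _ ≤ c⁻¹ * Real.exp (birkhoff φ (k + 1) ω) := mul_le_mul_of_nonneg_left he hc0.le
    _ ≤ _ := h1

lemma decay (hl : 2 ≤ l) (hA : Primitive A) {n : ℕ} (hn : 0 < n) (hApos : ∀ i j, 0 < (A ^ n) i j)
    (hc : 1 < c)
    (hG : ∀ (ω : SigmaA l A) (k : ℕ), 0 < k →
      c⁻¹ ≤ (μ (cylinder A (wordPrefix ω k))).toReal / Real.exp (birkhoff φ k ω) ∧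
      (μ (cylinder A (wordPrefix ω k))).toReal / Real.exp (birkhoff φ k ω) ≤ c)
    {mφ : ℝ} (hmφ : ∀ υ, mφ ≤ φ υ) (ω : SigmaA l A) (k : ℕ) :
    (μ (cylinder A (wordPrefix ω (k + n)))).toReal ≤
      (1 - c⁻¹ * c⁻¹ * Real.exp (n * mφ)) * (μ (cylinder A (wordPrefix ω k))).toReal := by
  have hc0 : (0:ℝ) < c⁻¹ := inv_pos.2 (by linarith)
  -- choose a letter different from ω (k+n-1)
  set j : Fin l := if ω.1 (k + n - 1) = ⟨0, by omega⟩ then ⟨1, by omega⟩ else ⟨0, by omega⟩ with hj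
  have hjne : j ≠ ω.1 (k + n - 1) := by
    by_cases h : ω.1 (k + n - 1) = ⟨0, by omega⟩
    · rw [hj, if_pos h, h]
      intro hcon
      exact absurd (congrArg Fin.val hcon) (by simp)
    · rw [hj, if_neg h]
      intro hcon
      exact h hcon.symm
  set i₀ : Fin l := if k = 0 then j else ω.1 (k - 1) with hi₀
  obtain ⟨p, hp0, hpn, hpt⟩ := path_exists hA n i₀ j (hApos i₀ j)
  set g : ℕ → Fin l := fun i => if i + 1 ≤ k then ω.1 i else p (i + 1 - k) with hg
  have hgt : ∀ i, i + 1 < k + n → A (g i) (g (i + 1)) = 1 := by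
    intro i hi
    show A (if i + 1 ≤ k then ω.1 i else p (i + 1 - k))
        (if i + 1 + 1 ≤ k then ω.1 (i + 1) else p (i + 1 + 1 - k)) = 1
    by_cases h1 : i + 1 + 1 ≤ k
    · rw [if_pos (by omega), if_pos h1]
      exact ω.2 i
    · by_cases h2 : i + 1 ≤ k
      · have hik : i + 1 = k := by omega
        rw [if_pos h2, if_neg h1, show i + 1 + 1 - k = 1 by omega]
        have hp0' : p 0 = ω.1 i := by
          rw [hp0, hi₀, if_neg (by omega), show k - 1 = i by omega]
        rw [show ω.1 i = p 0 from hp0'.symm]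
        exact hpt 0 hn
      · rw [if_neg h1, if_neg h2, show i + 1 + 1 - k = (i + 1 - k) + 1 by omega]
        exact hpt (i + 1 - k) (by omega)
  obtain ⟨ω', hω'⟩ := chainExtend hA g (k + n) hgt
  have hwpk : wordPrefix ω' k = wordPrefix ω k := by
    apply List.ext_getElem (by simp)
    intro i h1 h2
    rw [wp_get, wp_get, hω' i (by simp at h1; omega)]
    show (if i + 1 ≤ k then ω.1 i else p (i + 1 - k)) = ω.1 i
    rw [if_pos (by simp at h1; omega)]
  have hlast : ω'.1 (k + n - 1) = j := by
    rw [hω' (k + n - 1) (by omega)]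
    show (if (k + n - 1) + 1 ≤ k then _ else p ((k + n - 1) + 1 - k)) = j
    rw [if_neg (by omega), show (k + n - 1) + 1 - k = n by omega]
    exact hpn
  have hne : wordPrefix ω' (k + n) ≠ wordPrefix ω (k + n) := by
    intro hcon
    have h1 : (wordPrefix ω' (k + n))[k + n - 1]'(by simp; omega) =
        (wordPrefix ω (k + n))[k + n - 1]'(by simp; omega) := List.getElem_of_eq hcon _
    rw [wp_get, wp_get, hlast] at h1
    exact hjne (h1.trans rfl)
  have hdisj : Disjoint (cylinder A (wordPrefix ω' (k + n))) (cylinder A (wordPrefix ω (k + n))) :=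
    cylinder_disjoint (by simp) hne
  have hsub1 : cylinder A (wordPrefix ω (k + n)) ⊆ cylinder A (wordPrefix ω k) :=
    cylinder_anti (wp_prefix ω (by omega))
  have hsub2 : cylinder A (wordPrefix ω' (k + n)) ⊆ cylinder A (wordPrefix ω k) := by
    rw [← hwpk]
    exact cylinder_anti (wp_prefix ω' (by omega))
  -- measure inequality
  have hadd : μ (cylinder A (wordPrefix ω' (k + n))) + μ (cylinder A (wordPrefix ω (k + n))) ≤
      μ (cylinder A (wordPrefix ω k)) := by
    rw [← measure_union hdisj (measurableSet_cylinder _)]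
    exact measure_mono (Set.union_subset hsub2 hsub1)
  have haddR : (μ (cylinder A (wordPrefix ω' (k + n)))).toReal +
      (μ (cylinder A (wordPrefix ω (k + n)))).toReal ≤
      (μ (cylinder A (wordPrefix ω k))).toReal := by
    rw [← ENNReal.toReal_add (measure_ne_top μ _) (measure_ne_top μ _)]
    exact ENNReal.toReal_mono (measure_ne_top μ _) hadd
  -- lower bound for the second cylinder
  have hv : c⁻¹ * c⁻¹ * Real.exp (n * mφ) * (μ (cylinder A (wordPrefix ω k))).toReal ≤
      (μ (cylinder A (wordPrefix ω' (k + n)))).toReal := by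
    have h1 := gibbs_lower hc hG ω' (show 0 < k + n by omega)
    have h2 := gibbs_upper hc hG ω' k
    have hb : birkhoff φ (k + n) ω' = birkhoff φ k ω' + birkhoff φ n (shift^[k] ω') :=
      birkhoff_add φ k n ω'
    have hb1 : (n : ℝ) * mφ ≤ birkhoff φ n (shift^[k] ω') := birkhoff_ge φ hmφ n _
    have he : Real.exp ((n : ℝ) * mφ) * Real.exp (birkhoff φ k ω') ≤
        Real.exp (birkhoff φ (k + n) ω') := by
      rw [hb, Real.exp_add, mul_comm (Real.exp (birkhoff φ k ω')) _]
      exact mul_le_mul_of_nonneg_right (Real.exp_le_exp.2 hb1) (Real.exp_pos _).le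
    have he2 : c⁻¹ * (μ (cylinder A (wordPrefix ω' k))).toReal ≤ Real.exp (birkhoff φ k ω') := by
      rw [inv_mul_le_iff₀ (by linarith : (0:ℝ) < c)]
      exact h2
    calc c⁻¹ * c⁻¹ * Real.exp (n * mφ) * (μ (cylinder A (wordPrefix ω k))).toReal
        = c⁻¹ * (Real.exp (n * mφ) * (c⁻¹ * (μ (cylinder A (wordPrefix ω' k))).toReal)) := by
          rw [hwpk]; ring
      _ ≤ c⁻¹ * (Real.exp (n * mφ) * Real.exp (birkhoff φ k ω')) :=
          mul_le_mul_of_nonneg_left (mul_le_mul_of_nonneg_left he2 (Real.exp_pos _).le) hc0.le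
      _ ≤ c⁻¹ * Real.exp (birkhoff φ (k + n) ω') := mul_le_mul_of_nonneg_left he hc0.le
      _ ≤ _ := h1
  nlinarith [haddR, hv]

lemma decay_iter (hl : 2 ≤ l) (hA : Primitive A) {n : ℕ} (hn : 0 < n)
    (hApos : ∀ i j, 0 < (A ^ n) i j) (hc : 1 < c)
    (hG : ∀ (ω : SigmaA l A) (k : ℕ), 0 < k →
      c⁻¹ ≤ (μ (cylinder A (wordPrefix ω k))).toReal / Real.exp (birkhoff φ k ω) ∧
      (μ (cylinder A (wordPrefix ω k))).toReal / Real.exp (birkhoff φ k ω) ≤ c)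
    {mφ : ℝ} (hmφ : ∀ υ, mφ ≤ φ υ) (ω : SigmaA l A) (k m : ℕ) :
    (μ (cylinder A (wordPrefix ω (k + m * n)))).toReal ≤
      (1 - c⁻¹ * c⁻¹ * Real.exp (n * mφ)) ^ m * (μ (cylinder A (wordPrefix ω k))).toReal := by
  have hθ0 : 0 ≤ 1 - c⁻¹ * c⁻¹ * Real.exp (n * mφ) := by
    have h1 := decay hl hA hn hApos hc hG hmφ ω 0
    have h2 := gibbs_lower hc hG ω hn
    rw [zero_add] at h1
    rw [mur_wp_zero, mul_one] at h1
    have h3 : (0:ℝ) < c⁻¹ * Real.exp (birkhoff φ n ω) := by positivity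
    linarith
  induction m with
  | zero => simp
  | succ m ih =>
    have h1 : k + (m + 1) * n = (k + m * n) + n := by ring
    rw [h1]
    calc (μ (cylinder A (wordPrefix ω (k + m * n + n)))).toReal ≤
        (1 - c⁻¹ * c⁻¹ * Real.exp (n * mφ)) * (μ (cylinder A (wordPrefix ω (k + m * n)))).toReal :=
          decay hl hA hn hApos hc hG hmφ ω (k + m * n)
      _ ≤ (1 - c⁻¹ * c⁻¹ * Real.exp (n * mφ)) *
          ((1 - c⁻¹ * c⁻¹ * Real.exp (n * mφ)) ^ m * (μ (cylinder A (wordPrefix ω k))).toReal) :=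
          mul_le_mul_of_nonneg_left ih hθ0
      _ = (1 - c⁻¹ * c⁻¹ * Real.exp (n * mφ)) ^ (m + 1) *
          (μ (cylinder A (wordPrefix ω k))).toReal := by ring

lemma word_small (hl : 2 ≤ l) (hA : Primitive A) {n : ℕ} (hn : 0 < n)
    (hApos : ∀ i j, 0 < (A ^ n) i j) (hc : 1 < c)
    (hG : ∀ (ω : SigmaA l A) (k : ℕ), 0 < k →
      c⁻¹ ≤ (μ (cylinder A (wordPrefix ω k))).toReal / Real.exp (birkhoff φ k ω) ∧
      (μ (cylinder A (wordPrefix ω k))).toReal / Real.exp (birkhoff φ k ω) ≤ c)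
    {mφ : ℝ} (hmφ : ∀ υ, mφ ≤ φ υ) {y : List (Fin l)} (hy : Admissible A y)
    {m : ℕ} (hm : m * n ≤ y.length) :
    (μ (cylinder A y)).toReal ≤ (1 - c⁻¹ * c⁻¹ * Real.exp (n * mφ)) ^ m := by
  obtain ⟨ω, hω⟩ := exists_point_prefix hA hy
  have h1 : (μ (cylinder A y)).toReal ≤ (μ (cylinder A (wordPrefix ω (m * n)))).toReal := by
    rw [← hω]
    exact mur_mono (cylinder_anti (wp_prefix ω hm))
  have h2 := decay_iter hl hA hn hApos hc hG hmφ ω 0 m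
  rw [zero_add, mur_wp_zero, mul_one] at h2
  exact h1.trans h2

end Gibbs

/-- `μ` is a Gibbs measure for the potential `φ` with pressure `P`:
`c⁻¹ ≤ μ([ω_1,…,ω_k]) / exp(S_kφ(ω) − kP) ≤ c` for some `c > 1`. -/
def IsGibbs {A : Matrix (Fin l) (Fin l) ℕ} (φ : SigmaA l A → ℝ) (P : ℝ)
    (μ : Measure (SigmaA l A)) : Prop :=
  ∃ c : ℝ, 1 < c ∧ ∀ (ω : SigmaA l A) (k : ℕ), 0 < k →
    c⁻¹ ≤ (μ (cylinder A (wordPrefix ω k))).toReal / Real.exp (birkhoff φ k ω - k * P) ∧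
      (μ (cylinder A (wordPrefix ω k))).toReal / Real.exp (birkhoff φ k ω - k * P) ≤ c

/-- `φ` is Hölder continuous with respect to the metric `d(ω,υ) = 2^{-(ω ∧ υ)}`:
there are `C` and an exponent `s > 0` with `|φ(ω) − φ(υ)| ≤ C ⬝ d(ω,υ)^s`, i.e.
`|φ(ω) − φ(υ)| ≤ C ⬝ 2^{-sn}` whenever `ω` and `υ` agree in their first `n` coordinates. -/
def HolderCont {A : Matrix (Fin l) (Fin l) ℕ} (φ : SigmaA l A → ℝ) : Prop :=
  ∃ C s : ℝ, 0 < s ∧ ∀ (ω υ : SigmaA l A) (n : ℕ),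
    (∀ i < n, ω.1 i = υ.1 i) → |φ ω - φ υ| ≤ C * (2 : ℝ) ^ (-(s * n))

/-- `Υ_x(t)`: the set of admissible words `y` with `[y] ⊆ [x]` and `μ([y]) > t`. -/
def upsilonSet (A : Matrix (Fin l) (Fin l) ℕ) (μ : Measure (SigmaA l A))
    (x : List (Fin l)) (t : ℝ) : Set (List (Fin l)) :=
  {y | Admissible A y ∧ cylinder A y ⊆ cylinder A x ∧ t < (μ (cylinder A y)).toReal}

/-- For a Gibbs measure `μ` with zero pressure and any
`x ∈ Σ_A^* ∪ {∅}`, the counting function `Υ_x(t)` is comparable to `t⁻¹` as `t → 0⁺`. -/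
theorem upsilon_comparable_inv
    (hl : 2 ≤ l) (A : Matrix (Fin l) (Fin l) ℕ) (hA : Primitive A)
    (φ : SigmaA l A → ℝ) (hφ : HolderCont φ)
    (μ : Measure (SigmaA l A)) [IsProbabilityMeasure μ] (hGibbs : IsGibbs φ 0 μ)
    (x : List (Fin l)) (hx : x = [] ∨ Admissible A x) :
    ∃ c₁ c₂ t₀ : ℝ, 0 < c₁ ∧ 0 < c₂ ∧ 0 < t₀ ∧ ∀ t : ℝ, 0 < t → t < t₀ →
      c₁ * t⁻¹ ≤ ((upsilonSet A μ x t).ncard : ℝ) ∧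
        ((upsilonSet A μ x t).ncard : ℝ) ≤ c₂ * t⁻¹ := by
  classical
  obtain ⟨h01, n, hn, hApos⟩ := id hA
  obtain ⟨c, hc, hG0⟩ := hGibbs
  have hcpos : (0:ℝ) < c := by linarith
  have hcinv : (0:ℝ) < c⁻¹ := inv_pos.2 hcpos
  have hG : ∀ (ω : SigmaA l A) (k : ℕ), 0 < k →
      c⁻¹ ≤ (μ (cylinder A (wordPrefix ω k))).toReal / Real.exp (birkhoff φ k ω) ∧
      (μ (cylinder A (wordPrefix ω k))).toReal / Real.exp (birkhoff φ k ω) ≤ c := by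
    intro ω k hk
    have := hG0 ω k hk
    simpa using this
  obtain ⟨C, s, hs, hH⟩ := hφ
  obtain ⟨ω₀, -⟩ := exists_point hA hl
  set mφ := φ ω₀ - C with hmφdef
  have hmφ : ∀ υ, mφ ≤ φ υ := by
    intro υ
    have h1 := hH ω₀ υ 0 (by omega)
    have h2 : |φ ω₀ - φ υ| ≤ C := by simpa using h1
    have := (abs_le.1 h2).2
    rw [hmφdef]; linarith
  set κ := c⁻¹ * c⁻¹ * Real.exp (n * mφ) with hκdef
  set θ := 1 - κ with hθdef
  have hκpos : 0 < κ := by positivity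
  have hθlt : θ < 1 := by rw [hθdef]; linarith
  have hθpos : 0 < θ := by
    have h1 := decay hl hA hn hApos hc hG hmφ ω₀ 0
    have h2 := gibbs_lower hc hG ω₀ hn
    rw [zero_add, mur_wp_zero, mul_one] at h1
    have h3 : (0:ℝ) < c⁻¹ * Real.exp (birkhoff φ n ω₀) := by positivity
    rw [hθdef, hκdef]; linarith
  -- positivity of μ([x])
  have hμx : 0 < (μ (cylinder A x)).toReal := by
    rcases hx with h | h
    · subst h; rw [cylinder_nil]; simp
    · obtain ⟨ω, hω⟩ := exists_point_prefix hA h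
      have hxlen : 0 < x.length := by
        cases x with
        | nil => exact absurd rfl h.1
        | cons a b => simp
      have := gibbs_lower hc hG ω hxlen
      rw [hω] at this
      have h3 : (0:ℝ) < c⁻¹ * Real.exp (birkhoff φ x.length ω) := by positivity
      linarith
  obtain ⟨q₀, hq₀⟩ := exists_pow_lt_of_lt_one (by norm_num : (0:ℝ) < 1/2) hθlt
  have hq₀pos : 0 < q₀ := by
    rcases Nat.eq_zero_or_pos q₀ with h | h
    · rw [h] at hq₀; norm_num at hq₀
    · exact h
  set m₁ := n * q₀ with hm₁def
  have hm₁pos : 0 < m₁ := Nat.mul_pos hn hq₀pos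
  refine ⟨(μ (cylinder A x)).toReal / l, 2 * m₁, min ((μ (cylinder A x)).toReal) (c⁻¹ * Real.exp mφ),
    by positivity, by positivity, lt_min hμx (by positivity), ?_⟩
  intro t ht ht₀
  have htx : t < (μ (cylinder A x)).toReal := lt_of_lt_of_le ht₀ (min_le_left _ _)
  have hte : t < c⁻¹ * Real.exp mφ := lt_of_lt_of_le ht₀ (min_le_right _ _)
  -- finiteness of the upsilon set
  obtain ⟨mt, hmt⟩ := exists_pow_lt_of_lt_one ht hθlt
  have hUsub : upsilonSet A μ x t ⊆ {y : List (Fin l) | y.length ≤ n * mt} := by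
    intro y hy
    by_contra hlen
    have h1 : mt * n ≤ y.length := by rw [Nat.mul_comm]; simp at hlen; omega
    have h2 := word_small hl hA hn hApos hc hG hmφ hy.1 h1
    rw [← hκdef, ← hθdef] at h2
    exact absurd (lt_of_lt_of_le hy.2.2 h2) (not_lt.2 hmt.le)
  have hUfin : (upsilonSet A μ x t).Finite := (List.finite_length_le (Fin l) (n * mt)).subset hUsub
  have hncard : ((upsilonSet A μ x t).ncard : ℝ) = (hUfin.toFinset.card : ℝ) := by
    rw [Set.ncard_eq_toFinset_card _ hUfin]
  constructor
  · -- lower bound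
    rw [hncard]
    set L := max x.length 1 with hLdef
    have hwit : ∀ ω : SigmaA l A,
        L + 1 ≤ L + 1 + n * mt ∧ (μ (cylinder A (wordPrefix ω (L + 1 + n * mt)))).toReal ≤ t := by
      intro ω
      refine ⟨by omega, ?_⟩
      have h1 : (μ (cylinder A (wordPrefix ω (L + 1 + n * mt)))).toReal ≤
          (μ (cylinder A (wordPrefix ω (mt * n)))).toReal :=
        mur_mono (cylinder_anti (wp_prefix ω (by rw [Nat.mul_comm]; omega)))
      have h2 := decay_iter hl hA hn hApos hc hG hmφ ω 0 mt
      rw [zero_add, mur_wp_zero, mul_one, ← hκdef, ← hθdef] at h2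
      linarith [hmt]
    have hKey : ∀ ω : SigmaA l A, ω ∈ cylinder A x → ∃ kk : ℕ,
        1 ≤ kk ∧ x.length ≤ kk ∧ kk ≤ L + n * mt ∧
          (μ (cylinder A (wordPrefix ω (kk + 1)))).toReal ≤ t ∧
          t < (μ (cylinder A (wordPrefix ω kk))).toReal := by
      intro ω hω
      have hex : ∃ k, L + 1 ≤ k ∧ (μ (cylinder A (wordPrefix ω k))).toReal ≤ t :=
        ⟨L + 1 + n * mt, hwit ω⟩
      have hk1 : L + 1 ≤ Nat.find hex := (Nat.find_spec hex).1
      have hk2 : (μ (cylinder A (wordPrefix ω (Nat.find hex)))).toReal ≤ t := (Nat.find_spec hex).2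
      have hkB : Nat.find hex ≤ L + 1 + n * mt := Nat.find_le (hwit ω)
      have hxL : x.length ≤ L := le_max_left _ _
      refine ⟨Nat.find hex - 1, by omega, by omega, by omega, ?_, ?_⟩
      · rw [show Nat.find hex - 1 + 1 = Nat.find hex by omega]; exact hk2
      · rcases Nat.lt_or_ge (Nat.find hex - 1) (L + 1) with h | h
        · have hkL : Nat.find hex - 1 = L := by omega
          rw [hkL]
          rcases hx with hxe | hxa
          · have hL1 : L = 1 := by rw [hLdef, hxe]; simp
            rw [hL1]
            have hg := gibbs_lower hc hG ω one_pos
            have hb : mφ ≤ birkhoff φ 1 ω := by simpa using birkhoff_ge φ hmφ 1 ω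
            have h5 : c⁻¹ * Real.exp mφ ≤ c⁻¹ * Real.exp (birkhoff φ 1 ω) :=
              mul_le_mul_of_nonneg_left (Real.exp_le_exp.2 hb) hcinv.le
            linarith [hte]
          · have hx1 : 1 ≤ x.length := by
              cases x with
              | nil => exact absurd rfl hxa.1
              | cons a b => simp
            have hL : L = x.length := by rw [hLdef]; omega
            rw [hL, ← eq_wp_of_mem_cylinder hω]
            exact htx
        · have hmin := Nat.find_min hex (show Nat.find hex - 1 < Nat.find hex by omega)
          push_neg at hmin
          exact hmin (by omega)
    choose! kk hkk1 hkk2 hkk3 hkk4 hkk5 using hKey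
    set F : SigmaA l A → List (Fin l) × Fin l := fun ω => (wordPrefix ω (kk ω), ω.1 (kk ω))
      with hFdef
    have hSsub : F '' (cylinder A x) ⊆
        {y : List (Fin l) | y.length ≤ L + 1 + n * mt} ×ˢ (Set.univ : Set (Fin l)) := by
      rintro p ⟨ω, hω, rfl⟩
      refine ⟨?_, Set.mem_univ _⟩
      show (wordPrefix ω (kk ω)).length ≤ L + 1 + n * mt
      rw [wp_length]
      have := hkk3 ω hω
      omega
    have hSfin : (F '' cylinder A x).Finite :=
      ((List.finite_length_le (Fin l) (L + 1 + n * mt)).prod Set.finite_univ).subset hSsub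
    have hcover : cylinder A x ⊆ ⋃ p ∈ hSfin.toFinset, cylinder A (p.1 ++ [p.2]) := by
      intro ω hω
      have hmem : F ω ∈ hSfin.toFinset := by
        rw [Set.Finite.mem_toFinset]; exact ⟨ω, hω, rfl⟩
      refine Set.mem_biUnion hmem ?_
      show ω ∈ cylinder A ((F ω).1 ++ [(F ω).2])
      have heq : (F ω).1 ++ [(F ω).2] = wordPrefix ω (kk ω + 1) := (wp_succ ω (kk ω)).symm
      rw [heq]
      exact mem_cylinder_wp ω _
    have hμsum : (μ (cylinder A x)).toReal ≤ (hSfin.toFinset.card : ℝ) * t := by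
      have h1 : μ (cylinder A x) ≤ ∑ p ∈ hSfin.toFinset, μ (cylinder A (p.1 ++ [p.2])) :=
        (measure_mono hcover).trans (measure_biUnion_finset_le _ _)
      have h2 : (μ (cylinder A x)).toReal ≤
          ∑ p ∈ hSfin.toFinset, (μ (cylinder A (p.1 ++ [p.2]))).toReal := by
        rw [← ENNReal.toReal_sum (fun p _ => measure_ne_top μ _)]
        exact ENNReal.toReal_mono (by
          exact (ENNReal.sum_lt_top.2 (fun p _ => (measure_lt_top μ _))).ne) h1
      refine h2.trans ?_
      calc ∑ p ∈ hSfin.toFinset, (μ (cylinder A (p.1 ++ [p.2]))).toReal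
          ≤ ∑ _p ∈ hSfin.toFinset, t := by
            apply Finset.sum_le_sum
            intro p hp
            rw [Set.Finite.mem_toFinset] at hp
            obtain ⟨ω, hω, rfl⟩ := hp
            have heq : (F ω).1 ++ [(F ω).2] = wordPrefix ω (kk ω + 1) := (wp_succ ω (kk ω)).symm
            rw [heq]
            exact hkk4 ω hω
        _ = (hSfin.toFinset.card : ℝ) * t := by rw [Finset.sum_const, nsmul_eq_mul]
    have hcard : (hSfin.toFinset.card : ℝ) ≤ (hUfin.toFinset.card : ℝ) * l := by
      have hsub : hSfin.toFinset ⊆ hUfin.toFinset ×ˢ (Finset.univ : Finset (Fin l)) := by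
        intro p hp
        rw [Set.Finite.mem_toFinset] at hp
        obtain ⟨ω, hω, rfl⟩ := hp
        rw [Finset.mem_product]
        refine ⟨?_, Finset.mem_univ _⟩
        rw [Set.Finite.mem_toFinset]
        refine ⟨wp_admissible ω (hkk1 ω hω), ?_, hkk5 ω hω⟩
        have hx' : x = wordPrefix ω x.length := eq_wp_of_mem_cylinder hω
        calc cylinder A (wordPrefix ω (kk ω))
            ⊆ cylinder A (wordPrefix ω x.length) := cylinder_anti (wp_prefix ω (hkk2 ω hω))
          _ = cylinder A x := by rw [← hx']
      have hcc := Finset.card_le_card hsub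
      rw [Finset.card_product, Finset.card_univ, Fintype.card_fin] at hcc
      exact_mod_cast hcc
    have hl0 : (0:ℝ) < l := by
      have : (2:ℝ) ≤ l := by exact_mod_cast hl
      linarith
    rw [div_mul_eq_mul_div, div_le_iff₀ hl0]
    have hfin : (μ (cylinder A x)).toReal ≤ ((hUfin.toFinset.card : ℝ) * l) * t :=
      hμsum.trans (mul_le_mul_of_nonneg_right hcard ht.le)
    calc (μ (cylinder A x)).toReal * t⁻¹
        ≤ (((hUfin.toFinset.card : ℝ) * l) * t) * t⁻¹ :=
          mul_le_mul_of_nonneg_right hfin (inv_pos.2 ht).le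
      _ = (hUfin.toFinset.card : ℝ) * l := by field_simp
  · -- upper bound
    rw [hncard]
    obtain ⟨J, hJ⟩ := pow_unbounded_of_one_lt (t⁻¹) (one_lt_two : (1:ℝ) < 2)
    set Lj : ℕ → Finset (List (Fin l)) := fun jj => hUfin.toFinset.filter
      (fun y => 2 ^ jj * t < (μ (cylinder A y)).toReal ∧
        (μ (cylinder A y)).toReal ≤ 2 ^ (jj + 1) * t) with hLjdef
    have hlayer : ∀ y ∈ hUfin.toFinset, ∃ jj < J, y ∈ Lj jj := by
      intro y hy
      have hy' := Set.Finite.mem_toFinset hUfin |>.1 hy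
      have hy3 : t < (μ (cylinder A y)).toReal := hy'.2.2
      set P : ℕ → Prop := fun jj => 2 ^ jj * t < (μ (cylinder A y)).toReal with hPdef
      have hP0 : P 0 := by show 2 ^ 0 * t < (μ (cylinder A y)).toReal; simpa using hy3
      have hspec : P (Nat.findGreatest P J) := Nat.findGreatest_spec (Nat.zero_le J) hP0
      have hle : Nat.findGreatest P J ≤ J := Nat.findGreatest_le J
      have hltJ : Nat.findGreatest P J < J := by
        rcases lt_or_eq_of_le hle with h | h
        · exact h
        · exfalso
          rw [h] at hspec
          have h1 : (μ (cylinder A y)).toReal ≤ 1 := mur_le_one y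
          have h2 : (1:ℝ) < 2 ^ J * t := by
            calc (1:ℝ) = t * t⁻¹ := (mul_inv_cancel₀ ht.ne').symm
              _ < t * 2 ^ J := mul_lt_mul_of_pos_left hJ ht
              _ = 2 ^ J * t := mul_comm _ _
          have hspec' : 2 ^ J * t < (μ (cylinder A y)).toReal := hspec
          linarith
      refine ⟨Nat.findGreatest P J, hltJ, ?_⟩
      rw [hLjdef, Finset.mem_filter]
      refine ⟨hy, hspec, ?_⟩
      have hgr := Nat.findGreatest_is_greatest (Nat.lt_succ_self (Nat.findGreatest P J))
        (by omega : Nat.findGreatest P J + 1 ≤ J)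
      have hgr' : ¬ (2 ^ (Nat.findGreatest P J + 1) * t < (μ (cylinder A y)).toReal) := hgr
      exact not_lt.1 hgr' 
    have hcardUF : (hUfin.toFinset.card : ℝ) ≤ ∑ jj ∈ Finset.range J, ((Lj jj).card : ℝ) := by
      have hsub : hUfin.toFinset ⊆ (Finset.range J).biUnion Lj := by
        intro y hy
        obtain ⟨jj, hjJ, hmem⟩ := hlayer y hy
        exact Finset.mem_biUnion.2 ⟨jj, Finset.mem_range.2 hjJ, hmem⟩
      have hcc := (Finset.card_le_card hsub).trans Finset.card_biUnion_le
      exact_mod_cast hcc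
    have hLjbound : ∀ jj : ℕ, ((Lj jj).card : ℝ) ≤ (m₁ : ℝ) * (2 ^ jj * t)⁻¹ := by
      intro jj
      have hpow : (0:ℝ) < 2 ^ jj * t := by positivity
      have hmemLj : ∀ y ∈ Lj jj, y ∈ upsilonSet A μ x t ∧
          2 ^ jj * t < (μ (cylinder A y)).toReal ∧
          (μ (cylinder A y)).toReal ≤ 2 ^ (jj + 1) * t := by
        intro y hy
        rw [hLjdef, Finset.mem_filter, Set.Finite.mem_toFinset] at hy
        exact ⟨hy.1, hy.2⟩
      have hchain : ∀ p ∈ Lj jj, ∀ y ∈ Lj jj, p ≠ y → p <+: y → y.length < p.length + m₁ := by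
        intro p hp y hyy hne hpre
        by_contra hcon
        push_neg at hcon
        obtain ⟨hpU, hp2, hp3⟩ := hmemLj p hp
        obtain ⟨hyU, hy2, hy3⟩ := hmemLj y hyy
        obtain ⟨ω, hω⟩ := exists_point_prefix hA hyU.1
        have hyw : y = wordPrefix ω y.length := hω.symm
        have hpw : p = wordPrefix ω p.length := by
          apply List.ext_getElem (by simp)
          intro i h1 h2
          rw [wp_get]
          have e1 : p[i]'h1 = y[i]'(lt_of_lt_of_le h1 hpre.length_le) := hpre.getElem h1
          have e2 : y[i]'(lt_of_lt_of_le h1 hpre.length_le) = ω.1 i := by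
            have e3 := List.getElem_of_eq hyw (lt_of_lt_of_le h1 hpre.length_le)
            rw [e3, wp_get]
          rw [e1, e2]
        have hplen : p.length + q₀ * n ≤ y.length := by
          have hcomm : q₀ * n = n * q₀ := Nat.mul_comm _ _
          rw [hm₁def] at hcon
          omega
        have h1 : (μ (cylinder A y)).toReal ≤
            (μ (cylinder A (wordPrefix ω (p.length + q₀ * n)))).toReal := by
          conv_lhs => rw [hyw]
          exact mur_mono (cylinder_anti (wp_prefix ω hplen))
        have h2 := decay_iter hl hA hn hApos hc hG hmφ ω p.length q₀
        rw [← hκdef, ← hθdef, ← hpw] at h2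
        have h4 : θ ^ q₀ * (μ (cylinder A p)).toReal < (1/2 : ℝ) * (2 ^ (jj + 1) * t) := by
          calc θ ^ q₀ * (μ (cylinder A p)).toReal ≤ θ ^ q₀ * (2 ^ (jj + 1) * t) :=
              mul_le_mul_of_nonneg_left hp3 (pow_nonneg hθpos.le _)
            _ < (1/2 : ℝ) * (2 ^ (jj + 1) * t) := mul_lt_mul_of_pos_right hq₀ (by positivity)
        have h5 : (1/2 : ℝ) * (2 ^ (jj + 1) * t) = 2 ^ jj * t := by ring
        linarith
      set hgt : List (Fin l) → ℕ := fun y => ((Lj jj).filter (fun p => p ≠ y ∧ p <+: y)).card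
        with hhgtdef
      have hhlt : ∀ y ∈ Lj jj, hgt y < m₁ := by
        intro y hy
        have hmaps : ∀ p ∈ (Lj jj).filter (fun p => p ≠ y ∧ p <+: y),
            p.length ∈ Finset.Ico (y.length + 1 - m₁) y.length := by
          intro p hp
          rw [Finset.mem_filter] at hp
          obtain ⟨hp1, hp2, hp3⟩ := hp
          have hlen1 : p.length < y.length := by
            rcases lt_or_eq_of_le hp3.length_le with h | h
            · exact h
            · exact absurd (hp3.eq_of_length h) hp2
          have hlen2 := hchain p hp1 y hy hp2 hp3
          rw [Finset.mem_Ico]; omega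
        have hinj : Set.InjOn List.length
            (((Lj jj).filter (fun p => p ≠ y ∧ p <+: y) : Finset (List (Fin l))) :
              Set (List (Fin l))) := by
          intro p hp p' hp' hlen
          rw [Finset.mem_coe, Finset.mem_filter] at hp hp'
          rw [List.prefix_iff_eq_take.1 hp.2.2, List.prefix_iff_eq_take.1 hp'.2.2, hlen]
        have hcard := Finset.card_le_card_of_injOn List.length hmaps hinj
        rw [Nat.card_Ico] at hcard
        have hby : hgt y = ((Lj jj).filter (fun p => p ≠ y ∧ p <+: y)).card := rfl
        omega
      set Fr : ℕ → Finset (List (Fin l)) := fun r => (Lj jj).filter (fun y => hgt y = r)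
        with hFrdef
      have hLsub : Lj jj ⊆ (Finset.range m₁).biUnion Fr := by
        intro y hy
        refine Finset.mem_biUnion.2 ⟨hgt y, Finset.mem_range.2 (hhlt y hy), ?_⟩
        rw [hFrdef, Finset.mem_filter]
        exact ⟨hy, rfl⟩
      have hFrb : ∀ r : ℕ, ((Fr r).card : ℝ) * (2 ^ jj * t) ≤ 1 := by
        intro r
        have hnopre : ∀ y ∈ Fr r, ∀ z ∈ Fr r, y ≠ z → ¬ (y <+: z) := by
          intro y hy z hz hne hpre
          rw [hFrdef, Finset.mem_filter] at hy hz
          have hylen : y.length < z.length := by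
            rcases lt_or_eq_of_le hpre.length_le with h | h
            · exact h
            · exact absurd (hpre.eq_of_length h) hne
          have hsubset : insert y ((Lj jj).filter (fun p => p ≠ y ∧ p <+: y)) ⊆
              (Lj jj).filter (fun p => p ≠ z ∧ p <+: z) := by
            intro p hp
            rcases Finset.mem_insert.1 hp with h | h
            · rw [h]
              exact Finset.mem_filter.2 ⟨hy.1, hne, hpre⟩
            · rw [Finset.mem_filter] at h
              refine Finset.mem_filter.2 ⟨h.1, ?_, h.2.2.trans hpre⟩
              intro hcon
              have hll := h.2.2.length_le
              rw [hcon] at hll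
              omega
          have hcardle := Finset.card_le_card hsubset
          rw [Finset.card_insert_of_notMem (by
            intro hcon
            exact (Finset.mem_filter.1 hcon).2.1 rfl)] at hcardle
          have hy2 := hy.2
          have hz2 := hz.2
          have hby : hgt y = ((Lj jj).filter (fun p => p ≠ y ∧ p <+: y)).card := rfl
          have hbz : hgt z = ((Lj jj).filter (fun p => p ≠ z ∧ p <+: z)).card := rfl
          omega
        have hanti : ∀ y ∈ Fr r, ∀ z ∈ Fr r, y ≠ z → Disjoint (cylinder A y) (cylinder A z) := by
          intro y hy z hz hne
          by_contra hdis
          obtain ⟨ω, hωy, hωz⟩ := Set.not_disjoint_iff.1 hdis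
          rcases le_total y.length z.length with h | h
          · exact hnopre y hy z hz hne (comparable_of_mem_cylinder hωy hωz h)
          · exact hnopre z hz y hy hne.symm (comparable_of_mem_cylinder hωz hωy h)
        have hdisj : (↑(Fr r) : Set (List (Fin l))).PairwiseDisjoint (fun y => cylinder A y) := by
          intro a ha b hb hne
          exact hanti a (Finset.mem_coe.1 ha) b (Finset.mem_coe.1 hb) hne
        have hmeas : μ (⋃ y ∈ Fr r, cylinder A y) = ∑ y ∈ Fr r, μ (cylinder A y) :=
          measure_biUnion_finset hdisj (fun y _ => measurableSet_cylinder y)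
        have hsum1 : ∑ y ∈ Fr r, (μ (cylinder A y)).toReal ≤ 1 := by
          rw [← ENNReal.toReal_sum (fun p _ => measure_ne_top μ _), ← hmeas]
          have h1 : μ (⋃ y ∈ Fr r, cylinder A y) ≤ 1 := prob_le_one
          calc (μ (⋃ y ∈ Fr r, cylinder A y)).toReal ≤ (1 : ℝ≥0∞).toReal :=
              ENNReal.toReal_mono (by simp) h1
            _ = 1 := by simp
        have hsum2 : ((Fr r).card : ℝ) * (2 ^ jj * t) ≤
            ∑ y ∈ Fr r, (μ (cylinder A y)).toReal := by
          have hcs := Finset.card_nsmul_le_sum (Fr r)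
            (fun y => (μ (cylinder A y)).toReal) (2 ^ jj * t)
            (fun y hy => ((hmemLj y (Finset.mem_filter.1 hy).1).2.1).le)
          simpa [nsmul_eq_mul] using hcs
        linarith
      have hcards : ((Lj jj).card : ℝ) ≤ ∑ r ∈ Finset.range m₁, ((Fr r).card : ℝ) := by
        have hcc := (Finset.card_le_card hLsub).trans Finset.card_biUnion_le
        exact_mod_cast hcc
      have hsum3 : ∑ r ∈ Finset.range m₁, ((Fr r).card : ℝ) ≤ (m₁ : ℝ) * (2 ^ jj * t)⁻¹ := by
        calc ∑ r ∈ Finset.range m₁, ((Fr r).card : ℝ)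
            ≤ ∑ _r ∈ Finset.range m₁, (2 ^ jj * t)⁻¹ := by
              apply Finset.sum_le_sum
              intro r _
              have h1 := hFrb r
              rw [← le_div_iff₀ hpow] at h1
              rwa [one_div] at h1
          _ = (m₁ : ℝ) * (2 ^ jj * t)⁻¹ := by
              rw [Finset.sum_const, Finset.card_range, nsmul_eq_mul]
      linarith
    have hfinal : ∑ jj ∈ Finset.range J, (m₁ : ℝ) * (2 ^ jj * t)⁻¹ ≤ 2 * m₁ * t⁻¹ := by
      have h1 : ∀ jj : ℕ, ((2:ℝ) ^ jj * t)⁻¹ = (1/2 : ℝ)^jj * t⁻¹ := by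
        intro jj
        rw [mul_inv, ← inv_pow]
        norm_num
      calc ∑ jj ∈ Finset.range J, (m₁:ℝ) * (2 ^ jj * t)⁻¹
          = (m₁:ℝ) * t⁻¹ * ∑ jj ∈ Finset.range J, (1/2:ℝ)^jj := by
            rw [Finset.mul_sum]
            apply Finset.sum_congr rfl
            intro jj _
            rw [h1 jj]; ring
        _ ≤ (m₁:ℝ) * t⁻¹ * 2 := by
            have hg : ∑ jj ∈ Finset.range J, (1/2:ℝ)^jj ≤ 2 := by
              rw [geom_sum_eq (by norm_num : (1/2:ℝ) ≠ 1) J]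
              rw [div_le_iff_of_neg (by norm_num : (1/2:ℝ) - 1 < 0)]
              have h2 : (0:ℝ) ≤ (1/2:ℝ)^J := by positivity
              nlinarith
            exact mul_le_mul_of_nonneg_left hg (by positivity)
        _ = 2 * m₁ * t⁻¹ := by ring
    calc (hUfin.toFinset.card : ℝ) ≤ ∑ jj ∈ Finset.range J, ((Lj jj).card : ℝ) := hcardUF
      _ ≤ ∑ jj ∈ Finset.range J, (m₁:ℝ) * (2 ^ jj * t)⁻¹ :=
          Finset.sum_le_sum (fun jj _ => hLjbound jj)
      _ ≤ 2 * m₁ * t⁻¹ := hfinal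

end SFT
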